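/- Let c > 0, let y : [0,∞) → ℝ be càdlàg, and let z : [0,∞) → ℝ be the unique càdlàg solution of z(t) = y(t) − c ∫_0^t z(s) ds. Then for all t > 0 and all δ with 0 < δ < t, z(t) ≥ y(t) e^{−ct} − sup_{s ∈ [t−δ, t]} |y(t) − y(s)| − 2 e^{−cδ} · sup_{s ∈ [0, t]} |y(s)|. -/

import Mathlib

open Filter MeasureTheory

/-- A function `y : [0,∞) → ℝ` (encoded on all of `ℝ`, with only its values on
`[0,∞)` relevant) is càdlàg: right-continuous at every `t ≥ 0` and with a finite
left limit at every `t > 0`. -/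
def Cadlag (y : ℝ → ℝ) : Prop :=
  (∀ t : ℝ, 0 ≤ t → ContinuousWithinAt y (Set.Ici t) t) ∧
  (∀ t : ℝ, 0 < t → ∃ l : ℝ, Tendsto y (nhdsWithin t (Set.Iio t)) (nhds l))

/-!
Integrating the equation against `e^{cs}` (variation of constants) gives the explicit solution
`z(t) = y(t) - c e^{-ct} ∫₀ᵗ e^{cs} y(s) ds`. The kernel `c e^{-c(t-s)}` puts mass `1 - e^{-cδ}`
on `[t - δ, t]`, where `y(s) ≤ y(t) + sup |y(t) - y(s)|`, and mass `e^{-cδ} - e^{-ct}` on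
`[0, t - δ]`, where `y(s) ≤ sup |y|`; collecting terms gives the bound.
-/

open Set Topology Real

/-- Sampling at the right endpoints of a grid of mesh `1 / (n + 1)` approximates a
right-continuous function pointwise by measurable step functions. -/
theorem measurable_of_continuousWithinAt_Ici {β : Type*} [TopologicalSpace β]
    [TopologicalSpace.PseudoMetrizableSpace β] [MeasurableSpace β] [BorelSpace β] {f : ℝ → β}
    (hf : ∀ t, ContinuousWithinAt f (Ici t) t) : Measurable f := by
  let grid : ℕ → ℝ → ℝ := fun n s => ⌈s * (n + 1)⌉ / (n + 1)
  have hgrid_meas (n : ℕ) : Measurable fun s => f (grid n s) :=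
    (measurable_from_top (f := fun k : ℤ => f (k / (n + 1)))).comp
      (Int.measurable_ceil.comp (measurable_id.mul_const _))
  have hgrid_lim (s : ℝ) : Tendsto (fun n => grid n s) atTop (𝓝[≥] s) := by
    have hle (n : ℕ) : s ≤ grid n s := by
      rw [le_div_iff₀ (by positivity)]
      exact Int.le_ceil _
    have hge (n : ℕ) : grid n s ≤ s + 1 / ((n : ℝ) + 1) := by
      rw [div_le_iff₀ (by positivity), add_mul, one_div_mul_cancel (by positivity)]
      exact (Int.ceil_lt_add_one _).le
    have hlim : Tendsto (fun n : ℕ => s + 1 / ((n : ℝ) + 1)) atTop (𝓝 s) := by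
      simpa using tendsto_one_div_add_atTop_nhds_zero_nat.const_add s
    exact tendsto_nhdsWithin_of_tendsto_nhds_of_eventually_within _
      (tendsto_of_tendsto_of_tendsto_of_le_of_le tendsto_const_nhds hlim hle hge)
      (Eventually.of_forall hle)
  exact measurable_of_tendsto_metrizable hgrid_meas
    (tendsto_pi_nhds.2 fun s => (hf s).tendsto.comp (hgrid_lim s))

theorem mul_integral_exp_mul_le {c a b M : ℝ} {f : ℝ → ℝ} (hc : 0 ≤ c) (hab : a ≤ b)
    (hf : IntervalIntegrable f volume a b) (hM : ∀ s ∈ Icc a b, f s ≤ M) :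
    c * ∫ s in a..b, exp (c * s) * f s ≤ (exp (c * b) - exp (c * a)) * M := by
  have hexp : Continuous fun s => exp (c * s) := by fun_prop
  have hderiv (s : ℝ) : HasDerivAt (fun u => exp (c * u)) (c * exp (c * s)) s := by
    simpa [mul_comm] using ((hasDerivAt_id s).const_mul c).exp
  calc c * ∫ s in a..b, exp (c * s) * f s
      ≤ c * ∫ s in a..b, exp (c * s) * M := by
        gcongr
        exact intervalIntegral.integral_mono_on hab (hf.continuousOn_mul hexp.continuousOn)
          ((hexp.mul continuous_const).intervalIntegrable _ _)
          fun s hs => mul_le_mul_of_nonneg_left (hM s hs) (exp_pos _).le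
    _ = (∫ s in a..b, c * exp (c * s)) * M := by
        rw [intervalIntegral.integral_mul_const, intervalIntegral.integral_const_mul]; ring
    _ = (exp (c * b) - exp (c * a)) * M := by
        rw [intervalIntegral.integral_eq_sub_of_hasDerivAt (fun s _ => hderiv s)
          ((continuous_const.mul hexp).intervalIntegrable _ _)]

theorem le_biSup_of_forall_le {α β : Type*} [ConditionallyCompleteLattice β] {f : α → β}
    {S : Set α} {M : β} (hM : ∀ s ∈ S, f s ≤ M) {x : α} (hx : x ∈ S) :
    f x ≤ ⨆ s ∈ S, f s :=
  le_ciSup₂ (f := fun s (_ : s ∈ S) => f s) ⟨M, by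
    rintro _ ⟨_, ⟨s, rfl⟩, ⟨hs, rfl⟩⟩
    exact hM s hs⟩ x hx

namespace Cadlag

variable {f : ℝ → ℝ}

theorem continuous_mul (hf : Cadlag f) {g : ℝ → ℝ} (hg : Continuous g) :
    Cadlag fun s => g s * f s := by
  refine ⟨fun t ht => hg.continuousWithinAt.mul (hf.1 t ht), fun t ht => ?_⟩
  obtain ⟨l, hl⟩ := hf.2 t ht
  exact ⟨g t * l, (hg.tendsto t).mono_left nhdsWithin_le_nhds |>.mul hl⟩

theorem aestronglyMeasurable (hf : Cadlag f) {s : Set ℝ} (hs : s ⊆ Ici 0) :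
    AEStronglyMeasurable f (volume.restrict s) := by
  have hext : Measurable fun x => f (max x 0) :=
    measurable_of_continuousWithinAt_Ici fun t =>
      (hf.1 _ (le_max_right t 0)).comp (f := fun x => max x 0)
        (continuous_id.max continuous_const).continuousWithinAt
        fun x (hx : t ≤ x) => max_le_max hx le_rfl
  refine (hext.aestronglyMeasurable.congr ?_).mono_measure (Measure.restrict_mono hs le_rfl)
  exact ae_restrict_of_forall_mem measurableSet_Ici fun x hx =>
    show f (max x 0) = f x by rw [max_eq_left hx]

theorem isBoundedUnder_abs (hf : Cadlag f) {x : ℝ} (hx : 0 ≤ x) :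
    IsBoundedUnder (· ≤ ·) (𝓝[Ici 0] x) fun v => |f v| := by
  rcases hx.eq_or_lt with rfl | hx
  · exact (hf.1 0 le_rfl).tendsto.abs.isBoundedUnder_le
  · obtain ⟨l, hl⟩ := hf.2 x hx
    rw [nhdsWithin_eq_nhds.2 (Ici_mem_nhds hx), ← nhdsLT_sup_nhdsGE, IsBoundedUnder, map_sup]
    exact isBounded_sup hl.abs.isBoundedUnder_le (hf.1 x hx.le).tendsto.abs.isBoundedUnder_le

theorem exists_bound_Icc (hf : Cadlag f) (b : ℝ) :
    ∃ M, ∀ s ∈ Icc 0 b, |f s| ≤ M := by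
  suffices BddAbove ((fun v => |f v|) '' Icc 0 b) by
    obtain ⟨M, hM⟩ := this
    exact ⟨M, fun s hs => hM ⟨s, hs, rfl⟩⟩
  refine isCompact_Icc.induction_on (by simp) (fun s t hst ht => ht.mono (image_mono hst))
    (fun s t hs ht => by simpa only [image_union] using hs.union ht) fun x hx => ?_
  obtain ⟨M, hM⟩ := hf.isBoundedUnder_abs hx.1
  exact ⟨_, nhdsWithin_mono x Icc_subset_Ici_self hM, M, by
    rintro _ ⟨v, hv, rfl⟩
    exact hv⟩

theorem integrableOn_Icc (hf : Cadlag f) (b : ℝ) : IntegrableOn f (Icc 0 b) := by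
  obtain ⟨M, hM⟩ := hf.exists_bound_Icc b
  exact .of_bound measure_Icc_lt_top (hf.aestronglyMeasurable Icc_subset_Ici_self) M
    (ae_restrict_of_forall_mem measurableSet_Icc hM)

theorem intervalIntegrable (hf : Cadlag f) {a b : ℝ} (ha : 0 ≤ a) (hb : 0 ≤ b) :
    IntervalIntegrable f volume a b :=
  ((hf.integrableOn_Icc (max a b)).mono_set fun _ hx =>
    ⟨(le_min ha hb).trans hx.1, hx.2⟩).intervalIntegrable

theorem hasDerivWithinAt_integral (hf : Cadlag f) {x : ℝ} (hx : 0 ≤ x) :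
    HasDerivWithinAt (fun u => ∫ s in (0 : ℝ)..u, f s) (f x) (Ici x) x :=
  intervalIntegral.integral_hasDerivWithinAt_right (hf.intervalIntegrable le_rfl hx)
    ⟨Ioi x, self_mem_nhdsWithin, hf.aestronglyMeasurable fun _ hu => hx.trans (le_of_lt hu)⟩
    ((hf.1 x hx).mono Ioi_subset_Ici_self)

/-- Variation of constants: `u ↦ e^{cu} ∫₀ᵘ z - ∫₀ᵘ e^{cs} y(s) ds` has right derivative
`e^{cu} (z(u) + c ∫₀ᵘ z - y(u)) = 0`. -/
theorem exp_mul_integral_eq {c : ℝ} {y z : ℝ → ℝ} (hy : Cadlag y) (hzc : Cadlag z)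
    (hz : ∀ t, 0 ≤ t → z t = y t - c * ∫ s in (0 : ℝ)..t, z s) {t : ℝ} (ht : 0 ≤ t) :
    exp (c * t) * ∫ s in (0 : ℝ)..t, z s = ∫ s in (0 : ℝ)..t, exp (c * s) * y s := by
  have hexp : Continuous fun u => exp (c * u) := by fun_prop
  have hey : Cadlag fun s => exp (c * s) * y s := hy.continuous_mul hexp
  let F : ℝ → ℝ := fun u =>
    exp (c * u) * (∫ s in (0 : ℝ)..u, z s) - ∫ s in (0 : ℝ)..u, exp (c * s) * y s
  have hcont : ContinuousOn F (Icc 0 t) := by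
    rw [← uIcc_of_le ht]
    exact (hexp.continuousOn.mul (intervalIntegral.continuousOn_primitive_interval'
      (hzc.intervalIntegrable le_rfl ht) left_mem_uIcc)).sub
      (intervalIntegral.continuousOn_primitive_interval' (hey.intervalIntegrable le_rfl ht)
        left_mem_uIcc)
  have hderiv : ∀ x ∈ Ico 0 t, HasDerivWithinAt F 0 (Ici x) x := by
    intro x hx
    have hexp' : HasDerivAt (fun u => exp (c * u)) (exp (c * x) * c) x := by
      simpa using ((hasDerivAt_id x).const_mul c).exp
    refine ((hexp'.hasDerivWithinAt.mul (hzc.hasDerivWithinAt_integral hx.1)).sub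
      (hey.hasDerivWithinAt_integral hx.1)).congr_deriv ?_
    rw [hz x hx.1]
    ring
  simpa [F, sub_eq_zero] using constant_of_has_deriv_right_zero hcont hderiv t ⟨ht, le_rfl⟩

theorem le_of_eq_sub_const_mul_integral {c : ℝ} (hc : 0 ≤ c) {y z : ℝ → ℝ}
    (hy : Cadlag y) (hzc : Cadlag z)
    (hz : ∀ t, 0 ≤ t → z t = y t - c * ∫ s in (0 : ℝ)..t, z s) {t δ S₁ S₂ : ℝ}
    (hδ : 0 ≤ δ) (hδt : δ ≤ t) (hS₁ : ∀ s ∈ Icc (t - δ) t, |y t - y s| ≤ S₁)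
    (hS₂ : ∀ s ∈ Icc 0 t, |y s| ≤ S₂) :
    y t * exp (-(c * t)) - S₁ - 2 * exp (-(c * δ)) * S₂ ≤ z t := by
  have ht : 0 ≤ t := hδ.trans hδt
  have htδ : 0 ≤ t - δ := sub_nonneg.2 hδt
  have hS₁0 : 0 ≤ S₁ := by simpa using hS₁ t ⟨by linarith, le_rfl⟩
  have hyt : |y t| ≤ S₂ := hS₂ t ⟨ht, le_rfl⟩
  have hS₂0 : 0 ≤ S₂ := (abs_nonneg _).trans hyt
  have hyS₂ : 0 ≤ y t + S₂ := by linarith [neg_abs_le (y t)]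
  have hey : Cadlag fun s => exp (c * s) * y s := hy.continuous_mul (by fun_prop)
  have hsol := hy.exp_mul_integral_eq hzc hz ht
  rw [← intervalIntegral.integral_add_adjacent_intervals (hey.intervalIntegrable le_rfl htδ)
    (hey.intervalIntegrable htδ ht)] at hsol
  have hfar := mul_integral_exp_mul_le hc htδ (hy.intervalIntegrable le_rfl htδ)
    fun s hs => (le_abs_self _).trans (hS₂ s ⟨hs.1, hs.2.trans (by linarith)⟩)
  have hnear := mul_integral_exp_mul_le (M := y t + S₁) hc (by linarith)
    (hy.intervalIntegrable htδ ht) fun s hs => by linarith [neg_abs_le (y t - y s), hS₁ s hs]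
  rw [mul_zero, exp_zero] at hfar
  set I := ∫ s in (0 : ℝ)..t, z s
  set A₁ := ∫ s in (0 : ℝ)..t - δ, exp (c * s) * y s
  set A₂ := ∫ s in t - δ..t, exp (c * s) * y s
  set p := exp (-(c * t))
  set q := exp (-(c * δ))
  have hp : p * exp (c * t) = 1 := by rw [← exp_add]; simp
  have hq : p * exp (c * (t - δ)) = q := by rw [← exp_add]; congr 1; ring
  have hpq : p ≤ q := exp_le_exp.2 (by nlinarith)
  have hp0 : 0 < p := exp_pos _
  have hcI : c * I = p * (c * A₁) + p * (c * A₂) := by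
    linear_combination (-(c * I)) * hp + (c * p) * hsol
  have hexpand : p * ((exp (c * (t - δ)) - 1) * S₂)
      + p * ((exp (c * t) - exp (c * (t - δ))) * (y t + S₁))
      = (q - p) * S₂ + (1 - q) * (y t + S₁) := by
    linear_combination (S₂ - (y t + S₁)) * hq + (y t + S₁) * hp
  rw [hz t ht, hcI]
  -- the slack in the claimed bound is `(q - p) (y t + S₂) + q S₁ + 2 p S₂`
  linarith [mul_le_mul_of_nonneg_left hfar hp0.le, mul_le_mul_of_nonneg_left hnear hp0.le,
    mul_nonneg (sub_nonneg.2 hpq) hyS₂, mul_nonneg (exp_pos _ : 0 < q).le hS₁0,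
    mul_nonneg hp0.le hS₂0]

end Cadlag

/-- If `z` is the (unique) càdlàg solution of
`z(t) = y(t) − c ∫₀ᵗ z(s) ds`, then for all `0 < δ < t`,
`z(t) ≥ y(t)e^{−ct} − sup_{s∈[t−δ,t]} |y(t) − y(s)| − 2e^{−cδ} sup_{s∈[0,t]} |y(s)|`. -/
theorem stmt_5 (c : ℝ) (hc : 0 < c) (y : ℝ → ℝ) (hy : Cadlag y)
    (z : ℝ → ℝ) (hzc : Cadlag z)
    (hz : ∀ t, 0 ≤ t → z t = y t - c * ∫ s in (0 : ℝ)..t, z s) :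
    ∀ t, 0 < t → ∀ δ, 0 < δ → δ < t →
      y t * Real.exp (-(c * t)) - (⨆ s ∈ Set.Icc (t - δ) t, |y t - y s|)
        - 2 * Real.exp (-(c * δ)) * (⨆ s ∈ Set.Icc (0 : ℝ) t, |y s|) ≤ z t := by
  intro t _ δ hδ hδt
  obtain ⟨M, hM⟩ := hy.exists_bound_Icc t
  have hM' : ∀ s ∈ Icc (t - δ) t, |y t - y s| ≤ |y t| + M := fun s hs => by
    linarith [abs_sub (y t) (y s), hM s ⟨by linarith [hs.1], hs.2⟩]
  exact hy.le_of_eq_sub_const_mul_integral hc.le hzc hz hδ.le hδt.le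
    (fun s hs => le_biSup_of_forall_le hM' hs) fun s hs => le_biSup_of_forall_le hM hs
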